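/- Let Λ be a k-graph with a pseudo free self-similar action of a group G. Then the topology on G_{G,Λ} generated by the family B_{G,Λ} of basic sets is Hausdorff. -/

import Mathlib

/-!
Two distinct points of the groupoid lie in basic sets `Z(μᵢ, gᵢ, νᵢ)`, and these can be refined
so that `ν₁, ν₂` are the initial segments of a common degree `N` of the two sources, with `N`
so large that `ν₁ = ν₂` forces the sources to agree. Two refined basic sets that meet have the
same `ν`, the same `μ` (the `ℤ^k`-coordinate `d(μ) - d(ν)` is constant on a basic set) and, by
pseudo freeness, the same `g`; and inside one basic set a point is determined by its source.
-/

namespace SSKG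

/-- `ℕ^k`. -/
abbrev NK (k : ℕ) := Fin k → ℕ
/-- `ℤ^k`. -/
abbrev ZK (k : ℕ) := Fin k → ℤ

lemma le0 {k : ℕ} (p : NK k) : 0 ≤ p := Pi.le_def.mpr fun i => Nat.zero_le (p i)

/-- A (row-finite, source-free, countable) `k`-graph: a countable small category with a
degree functor `d` into `ℕ^k` satisfying the unique factorization property. -/
structure KGraph (k : ℕ) where
  Obj : Type
  Mor : Type
  countable_mor : Countable Mor
  r : Mor → Obj
  s : Mor → Obj
  d : Mor → NK k
  ofObj : Obj → Mor
  comp : (μ ν : Mor) → s μ = r ν → Mor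
  r_ofObj : ∀ v, r (ofObj v) = v
  s_ofObj : ∀ v, s (ofObj v) = v
  d_ofObj : ∀ v, d (ofObj v) = 0
  eq_ofObj_of_d_eq_zero : ∀ μ, d μ = 0 → ∃ v, μ = ofObj v
  r_comp : ∀ μ ν h, r (comp μ ν h) = r μ
  s_comp : ∀ μ ν h, s (comp μ ν h) = s ν
  d_comp : ∀ μ ν h, d (comp μ ν h) = d μ + d ν
  comp_ofObj : ∀ μ (h : s μ = r (ofObj (s μ))), comp μ (ofObj (s μ)) h = μ
  ofObj_comp : ∀ μ (h : s (ofObj (r μ)) = r μ), comp (ofObj (r μ)) μ h = μ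
  comp_assoc : ∀ μ ν ρ (h₁ : s μ = r ν) (h₂ : s ν = r ρ),
      comp (comp μ ν h₁) ρ ((s_comp μ ν h₁).trans h₂)
        = comp μ (comp ν ρ h₂) (h₁.trans (r_comp ν ρ h₂).symm)
  factor_exists : ∀ μ (n m : NK k), d μ = n + m →
      ∃ (α β : Mor) (h : s α = r β), d α = n ∧ d β = m ∧ comp α β h = μ
  factor_unique : ∀ (α β α' β' : Mor) (h : s α = r β) (h' : s α' = r β'),
      d α = d α' → comp α β h = comp α' β' h' → α = α' ∧ β = β'
  row_finite : ∀ (v : Obj) (n : NK k), {μ : Mor | r μ = v ∧ d μ = n}.Finite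
  no_sources : ∀ (v : Obj) (n : NK k), ∃ μ : Mor, r μ = v ∧ d μ = n

lemma KGraph.comp_congr {k : ℕ} (Λ : KGraph k) {μ ν ν' : Λ.Mor} (hν : ν = ν')
    (h : Λ.s μ = Λ.r ν) (h' : Λ.s μ = Λ.r ν') : Λ.comp μ ν h = Λ.comp μ ν' h' := by
  cases hν; rfl

/-- An edge: a morphism of degree `e_i` for some `i`. -/
def IsEdge {k : ℕ} (Λ : KGraph k) (μ : Λ.Mor) : Prop := ∃ i : Fin k, Λ.d μ = Pi.single i 1

/-- Membership in `Λ⁰ ∪ Λᵉ` (a vertex or an edge). -/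
def VorE {k : ℕ} (Λ : KGraph k) (μ : Λ.Mor) : Prop := Λ.d μ = 0 ∨ IsEdge Λ μ

/-- A self-similar action of a group `G` on a `k`-graph `Λ`: an action by degree-,
range- and source-preserving automorphisms, together with a restriction map
`(g, μ) ↦ g|_μ` satisfying the Exel–Pardo style axioms. -/
structure SelfSimilar (k : ℕ) (G : Type) [Group G] (Λ : KGraph k) where
  act : G → Λ.Mor → Λ.Mor
  res : G → Λ.Mor → G
  act_one : ∀ μ, act 1 μ = μ
  act_mul : ∀ g h μ, act (g * h) μ = act g (act h μ)
  act_d : ∀ g μ, Λ.d (act g μ) = Λ.d μ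
  act_ofObj_r : ∀ g μ, act g (Λ.ofObj (Λ.r μ)) = Λ.ofObj (Λ.r (act g μ))
  act_ofObj_s : ∀ g μ, act g (Λ.ofObj (Λ.s μ)) = Λ.ofObj (Λ.s (act g μ))
  compat : ∀ g μ ν (h : Λ.s μ = Λ.r ν), Λ.s (act g μ) = Λ.r (act (res g μ) ν)
  act_comp : ∀ g μ ν (h : Λ.s μ = Λ.r ν),
      act g (Λ.comp μ ν h) = Λ.comp (act g μ) (act (res g μ) ν) (compat g μ ν h)
  res_ofObj : ∀ g v, res g (Λ.ofObj v) = g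
  res_comp : ∀ g μ ν (h : Λ.s μ = Λ.r ν), res g (Λ.comp μ ν h) = res (res g μ) ν
  res_one : ∀ μ, res 1 μ = 1
  res_mul : ∀ g h μ, res (g * h) μ = res g (act h μ) * res h μ

variable {k : ℕ} {G : Type} [Group G] {Λ : KGraph k}

/-- The induced action of `G` on the vertices `Λ⁰`. -/
def SelfSimilar.actV (S : SelfSimilar k G Λ) (g : G) (v : Λ.Obj) : Λ.Obj :=
  Λ.s (S.act g (Λ.ofObj v))

/-- The action is pseudo free. -/
def SelfSimilar.PseudoFree (S : SelfSimilar k G Λ) : Prop :=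
  ∀ (g : G) (μ : Λ.Mor), S.act g μ = μ → S.res g μ = 1 → g = 1

/-- An infinite path in `Λ`: a degree-preserving functor `Ω_k → Λ`, recorded through
its segments `x(p,q)` for `p ≤ q`. -/
structure InfPath {k : ℕ} (Λ : KGraph k) where
  seg : ∀ p q : NK k, p ≤ q → Λ.Mor
  d_seg : ∀ p q (h : p ≤ q), Λ.d (seg p q h) = fun i => q i - p i
  src_seg : ∀ p q m (h₁ : p ≤ q) (h₂ : q ≤ m), Λ.s (seg p q h₁) = Λ.r (seg q m h₂)
  comp_seg : ∀ p q m (h₁ : p ≤ q) (h₂ : q ≤ m),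
      Λ.comp (seg p q h₁) (seg q m h₂) (src_seg p q m h₁ h₂) = seg p m (h₁.trans h₂)

lemma InfPath.ext' {x y : InfPath Λ} (h : x.seg = y.seg) : x = y := by
  cases x; cases y; cases h; rfl

/-- The shift `σ^p(x)`. -/
def InfPath.shift (x : InfPath Λ) (p : NK k) : InfPath Λ where
  seg m n h := x.seg (m + p) (n + p) (add_le_add_left h p)
  d_seg m n h := by
    rw [x.d_seg]; funext i; simp only [Pi.add_apply]; omega
  src_seg m n l h₁ h₂ := x.src_seg _ _ _ _ _
  comp_seg m n l h₁ h₂ := x.comp_seg _ _ _ _ _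

/-- The action of `G` on infinite paths: `(g·x)(p,q) = g|_{x(0,p)} · x(p,q)`. -/
def SelfSimilar.actInf (S : SelfSimilar k G Λ) (g : G) (x : InfPath Λ) : InfPath Λ where
  seg p q h := S.act (S.res g (x.seg 0 p (le0 p))) (x.seg p q h)
  d_seg p q h := by rw [S.act_d, x.d_seg]
  src_seg p q m h₁ h₂ := by
    have key : S.res g (x.seg 0 q (le0 q))
        = S.res (S.res g (x.seg 0 p (le0 p))) (x.seg p q h₁) := by
      rw [← S.res_comp g (x.seg 0 p (le0 p)) (x.seg p q h₁) (x.src_seg 0 p q (le0 p) h₁),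
        x.comp_seg 0 p q (le0 p) h₁]
    beta_reduce
    rw [key]
    exact S.compat _ _ _ (x.src_seg p q m h₁ h₂)
  comp_seg p q m h₁ h₂ := by
    have key : S.res g (x.seg 0 q (le0 q))
        = S.res (S.res g (x.seg 0 p (le0 p))) (x.seg p q h₁) := by
      rw [← S.res_comp g (x.seg 0 p (le0 p)) (x.seg p q h₁) (x.src_seg 0 p q (le0 p) h₁),
        x.comp_seg 0 p q (le0 p) h₁]
    beta_reduce
    rw [← x.comp_seg p q m h₁ h₂, S.act_comp]
    exact Λ.comp_congr (by rw [key]) _ _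

/-- The restriction cocycle `g|_x : ℕ^k → G`, `g|_x(p) = g|_{x(0,p)}`. -/
def SelfSimilar.resInf (S : SelfSimilar k G Λ) (g : G) (x : InfPath Λ) : NK k → G :=
  fun p => S.res g (x.seg 0 p (le0 p))

/-- `IsConcat μ x y` says that `y = μx`, the concatenation of the finite path `μ`
(with `x(0,0) = s(μ)`) and the infinite path `x`. -/
def IsConcat (Λ : KGraph k) (μ : Λ.Mor) (x y : InfPath Λ) : Prop :=
  x.seg 0 0 le_rfl = Λ.ofObj (Λ.s μ) ∧
  y.seg 0 (Λ.d μ) (le0 _) = μ ∧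
  ∀ m n (h : m ≤ n), y.seg (Λ.d μ + m) (Λ.d μ + n) (add_le_add_right h _) = x.seg m n h

/-- The cylinder set `Z(μ)`. -/
def cylinder (Λ : KGraph k) (μ : Λ.Mor) : Set (InfPath Λ) :=
  {x : InfPath Λ | x.seg 0 (Λ.d μ) (le0 _) = μ}

/-- The cylinder-set topology on `Λ^∞`. -/
instance instTopInfPath (Λ : KGraph k) : TopologicalSpace (InfPath Λ) :=
  TopologicalSpace.generateFrom {U | ∃ μ : Λ.Mor, U = cylinder Λ μ}

/-- `Λ` is `G`-cofinal. -/
def GCofinal (S : SelfSimilar k G Λ) : Prop :=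
  ∀ (x : InfPath Λ) (v : Λ.Obj), ∃ (p : NK k) (μ : Λ.Mor) (g : G),
    Λ.ofObj (Λ.s μ) = x.seg p p le_rfl ∧ Λ.r μ = S.actV g v

/-- `Λ` is `G`-aperiodic. -/
def GAperiodic (S : SelfSimilar k G Λ) : Prop :=
  ∀ v : Λ.Obj, ∃ x : InfPath Λ, x.seg 0 0 le_rfl = Λ.ofObj v ∧
    ∀ (g : G) (p q : NK k), g ≠ 1 ∨ p ≠ q → x.shift p ≠ S.actInf g (x.shift q)

/-- A subset `U ⊆ Λ^∞` is invariant for the self-similar action. -/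
def InvariantSet (S : SelfSimilar k G Λ) (U : Set (InfPath Λ)) : Prop :=
  ∀ (g : G) (μ ν : Λ.Mor) (x z y : InfPath Λ),
    Λ.s μ = S.actV g (Λ.s ν) → IsConcat Λ ν x z → IsConcat Λ μ (S.actInf g x) y →
    z ∈ U → y ∈ U

/-- The minimal common extensions `Λ^min(μ,ν)`. -/
def Lmin (Λ : KGraph k) (μ ν : Λ.Mor) : Set (Λ.Mor × Λ.Mor) :=
  {p | ∃ (h₁ : Λ.s μ = Λ.r p.1) (h₂ : Λ.s ν = Λ.r p.2),
      Λ.comp μ p.1 h₁ = Λ.comp ν p.2 h₂ ∧ Λ.d (Λ.comp μ p.1 h₁) = Λ.d μ ⊔ Λ.d ν}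

/-- The group `C(ℕ^k, G)` of all functions `ℕ^k → G` under pointwise multiplication. -/
abbrev CkG (k : ℕ) (G : Type) [Group G] := NK k → G

/-- The normal subgroup of eventually trivial functions. -/
def tailTrivial (k : ℕ) (G : Type) [Group G] : Subgroup (CkG k G) where
  carrier := {f | ∃ z : NK k, ∀ p, z ≤ p → f p = 1}
  one_mem' := ⟨0, fun _ _ => rfl⟩
  mul_mem' := by
    rintro f g ⟨z₁, h₁⟩ ⟨z₂, h₂⟩
    exact ⟨z₁ ⊔ z₂, fun p hp => by
      rw [Pi.mul_apply, h₁ p (le_trans le_sup_left hp), h₂ p (le_trans le_sup_right hp),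
        one_mul]⟩
  inv_mem' := by
    rintro f ⟨z, h⟩
    exact ⟨z, fun p hp => by rw [Pi.inv_apply, h p hp, inv_one]⟩

instance tailTrivialNormal (k : ℕ) (G : Type) [Group G] : (tailTrivial k G).Normal := by
  constructor
  rintro f ⟨z, hz⟩ g
  exact ⟨z, fun p hp => by
    simp only [Pi.mul_apply, Pi.inv_apply, hz p hp, mul_one, mul_inv_cancel]⟩

/-- The quotient group `Q(ℕ^k, G) = C(ℕ^k,G)/∼`. -/
abbrev QkG (k : ℕ) (G : Type) [Group G] := CkG k G ⧸ tailTrivial k G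

/-- Coercion `ℕ^k → ℤ^k`. -/
def toZ {k : ℕ} (p : NK k) : ZK k := fun i => (p i : ℤ)

open scoped Classical in
/-- The translation `T_z` on functions `ℕ^k → G`, for `z ∈ ℤ^k`. -/
noncomputable def transFun {k : ℕ} {G : Type} [Group G] (z : ZK k) (f : CkG k G) : CkG k G :=
  fun p => if (∀ i, z i ≤ (p i : ℤ)) then f (fun i => ((p i : ℤ) - z i).toNat) else 1

/-- The ambient space `Λ^∞ × (Q(ℕ^k,G) ⋊ ℤ^k) × Λ^∞` containing the self-similar
path groupoid (as a set). -/
abbrev Triple (k : ℕ) (G : Type) [Group G] (Λ : KGraph k) :=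
  InfPath Λ × (QkG k G × ZK k) × InfPath Λ

/-- The basic set `Z(μ, g, ν)` of the self-similar path groupoid. -/
def Zset (S : SelfSimilar k G Λ) (μ : Λ.Mor) (g : G) (ν : Λ.Mor) : Set (Triple k G Λ) :=
  {t | ∃ x y z : InfPath Λ, IsConcat Λ ν x z ∧ IsConcat Λ μ (S.actInf g x) y ∧
    t = (y, ((QuotientGroup.mk (transFun (toZ (Λ.d μ)) (S.resInf g x)) : QkG k G),
      toZ (Λ.d μ) - toZ (Λ.d ν)), z)}

/-- The family `B_{G,Λ}` of basic sets. -/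
def BGL (S : SelfSimilar k G Λ) : Set (Set (Triple k G Λ)) :=
  {A | ∃ (μ ν : Λ.Mor) (g : G), Λ.s μ = S.actV g (Λ.s ν) ∧ A = Zset S μ g ν}

/-- The self-similar path groupoid `G_{G,Λ}` (as a set of triples). -/
def Gpd (S : SelfSimilar k G Λ) : Set (Triple k G Λ) :=
  {t | ∃ (g : G) (μ ν : Λ.Mor), Λ.s μ = S.actV g (Λ.s ν) ∧ t ∈ Zset S μ g ν}

/-- The topology on `G_{G,Λ}` generated by the basic sets. -/
def gpdTop (S : SelfSimilar k G Λ) : TopologicalSpace {t : Triple k G Λ // t ∈ Gpd S} :=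
  TopologicalSpace.generateFrom
    {A | ∃ (μ ν : Λ.Mor) (g : G), A = {t | (t : Triple k G Λ) ∈ Zset S μ g ν}}


lemma InfPath.seg_congr (x : InfPath Λ) {p q p' q' : NK k} (hp : p = p') (hq : q = q')
    (h : p ≤ q) (h' : p' ≤ q') : x.seg p q h = x.seg p' q' h' := by
  subst hp hq; rfl

lemma InfPath.d_seg_zero (x : InfPath Λ) (N : NK k) : Λ.d (x.seg 0 N (le0 N)) = N := by
  rw [x.d_seg]; funext i; simp

lemma InfPath.seg_self (x : InfPath Λ) (N : NK k) :
    x.seg N N le_rfl = Λ.ofObj (Λ.s (x.seg 0 N (le0 N))) := by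
  have hd : Λ.d (x.seg N N le_rfl) = 0 := by rw [x.d_seg]; funext i; simp
  obtain ⟨v, hv⟩ := Λ.eq_ofObj_of_d_eq_zero _ hd
  rw [x.src_seg 0 N N (le0 N) le_rfl, hv, Λ.r_ofObj]

lemma InfPath.seg_zero_eq_of_le {x₁ x₂ : InfPath Λ} {m N : NK k} (hmN : m ≤ N)
    (h : x₁.seg 0 N (le0 N) = x₂.seg 0 N (le0 N)) :
    x₁.seg 0 m (le0 m) = x₂.seg 0 m (le0 m) := by
  have hd : Λ.d (x₁.seg 0 m (le0 m)) = Λ.d (x₂.seg 0 m (le0 m)) := by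
    rw [x₁.d_seg_zero, x₂.d_seg_zero]
  exact (Λ.factor_unique _ _ _ _ _ _ hd
    ((x₁.comp_seg 0 m N _ hmN).trans (h.trans (x₂.comp_seg 0 m N _ hmN).symm))).1

lemma InfPath.ext_seg_zero {x₁ x₂ : InfPath Λ}
    (h : ∀ m, x₁.seg 0 m (le0 m) = x₂.seg 0 m (le0 m)) : x₁ = x₂ := by
  refine InfPath.ext' (funext fun p => funext fun q => funext fun hpq => ?_)
  have hd : Λ.d (x₁.seg 0 p (le0 p)) = Λ.d (x₂.seg 0 p (le0 p)) := by
    rw [x₁.d_seg_zero, x₂.d_seg_zero]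
  exact (Λ.factor_unique _ _ _ _ _ _ hd
    ((x₁.comp_seg 0 p q _ hpq).trans ((h q).trans (x₂.comp_seg 0 p q _ hpq).symm))).2

lemma InfPath.exists_ge_seg_zero_eq_imp_eq (x₁ x₂ : InfPath Λ) (a : NK k) :
    ∃ N, a ≤ N ∧ (x₁.seg 0 N (le0 N) = x₂.seg 0 N (le0 N) → x₁ = x₂) := by
  by_cases hx : x₁ = x₂
  · exact ⟨a, le_rfl, fun _ => hx⟩
  obtain ⟨m, hm⟩ : ∃ m, x₁.seg 0 m (le0 m) ≠ x₂.seg 0 m (le0 m) := by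
    by_contra! h
    exact hx (InfPath.ext_seg_zero h)
  exact ⟨a ⊔ m, le_sup_left, fun h => absurd (InfPath.seg_zero_eq_of_le le_sup_right h) hm⟩

lemma IsConcat.tail_unique {μ : Λ.Mor} {x x' z : InfPath Λ}
    (h : IsConcat Λ μ x z) (h' : IsConcat Λ μ x' z) : x = x' :=
  InfPath.ext' (funext fun p => funext fun q => funext fun hpq =>
    (h.2.2 p q hpq).symm.trans (h'.2.2 p q hpq))

lemma IsConcat.seg_zero_add {μ : Λ.Mor} {x y : InfPath Λ} (h : IsConcat Λ μ x y) (m : NK k)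
    (hμ : Λ.s μ = Λ.r (x.seg 0 m (le0 m))) :
    y.seg 0 (Λ.d μ + m) (le0 _) = Λ.comp μ (x.seg 0 m (le0 m)) hμ := by
  rw [← y.comp_seg 0 (Λ.d μ) (Λ.d μ + m) (le0 _) le_self_add]
  congr 1
  · exact h.2.1
  · exact (y.seg_congr (add_zero _).symm rfl _ _).trans (h.2.2 0 m (le0 m))

lemma IsConcat.unique {μ : Λ.Mor} {x y y' : InfPath Λ}
    (h : IsConcat Λ μ x y) (h' : IsConcat Λ μ x y') : y = y' := by
  refine InfPath.ext_seg_zero fun m => ?_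
  have hμ : Λ.s μ = Λ.r (x.seg 0 m (le0 m)) := by
    rw [← x.src_seg 0 0 m le_rfl (le0 m), h.1, Λ.s_ofObj]
  exact InfPath.seg_zero_eq_of_le le_add_self
    ((h.seg_zero_add m hμ).trans (h'.seg_zero_add m hμ).symm)

lemma IsConcat.shift {μ : Λ.Mor} {x z : InfPath Λ} (h : IsConcat Λ μ x z) (n : NK k) :
    IsConcat Λ (z.seg 0 (Λ.d μ + n) (le0 _)) (x.shift n) z := by
  obtain ⟨h₁, -, h₃⟩ := h
  have hd : Λ.d (z.seg 0 (Λ.d μ + n) (le0 _)) = Λ.d μ + n := z.d_seg_zero _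
  refine ⟨?_, z.seg_congr rfl hd _ _, fun m m' hmm' => ?_⟩
  · calc (x.shift n).seg 0 0 le_rfl
        = x.seg n n le_rfl := x.seg_congr (zero_add n) (zero_add n) _ _
      _ = z.seg (Λ.d μ + n) (Λ.d μ + n) le_rfl := (h₃ n n le_rfl).symm
      _ = Λ.ofObj (Λ.s (z.seg 0 (Λ.d μ + n) (le0 _))) := z.seg_self _
  · calc z.seg (Λ.d (z.seg 0 (Λ.d μ + n) (le0 _)) + m)
          (Λ.d (z.seg 0 (Λ.d μ + n) (le0 _)) + m') (add_le_add_right hmm' _)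
        = z.seg (Λ.d μ + (n + m)) (Λ.d μ + (n + m'))
            (add_le_add_right (add_le_add_right hmm' n) _) :=
          z.seg_congr (by rw [hd, add_assoc]) (by rw [hd, add_assoc]) _ _
      _ = x.seg (n + m) (n + m') (add_le_add_right hmm' n) := h₃ (n + m) (n + m') _
      _ = x.seg (m + n) (m' + n) (add_le_add_left hmm' n) :=
          x.seg_congr (add_comm n m) (add_comm n m') _ _

namespace SelfSimilar

variable (S : SelfSimilar k G Λ)

lemma PseudoFree.eq_of_act_eq_of_res_eq (hpf : S.PseudoFree) {g₁ g₂ : G} {μ : Λ.Mor}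
    (hact : S.act g₁ μ = S.act g₂ μ) (hres : S.res g₁ μ = S.res g₂ μ) : g₁ = g₂ := by
  refine (inv_mul_eq_one.mp (hpf (g₂⁻¹ * g₁) μ ?_ ?_)).symm
  · rw [S.act_mul, hact, ← S.act_mul, inv_mul_cancel, S.act_one]
  · rw [S.res_mul, hact, hres, ← S.res_mul, inv_mul_cancel, S.res_one]

lemma res_seg_shift (g : G) (x : InfPath Λ) (n m : NK k) :
    S.res (S.res g (x.seg 0 n (le0 n))) ((x.shift n).seg 0 m (le0 m))
      = S.res g (x.seg 0 (m + n) (le0 _)) := by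
  have h : n ≤ m + n := le_add_self
  rw [show (x.shift n).seg 0 m (le0 m) = x.seg n (m + n) h from x.seg_congr (zero_add n) rfl _ _,
    ← S.res_comp _ _ _ (x.src_seg 0 n (m + n) (le0 n) h), x.comp_seg]

lemma actInf_seg_zero (g : G) (x : InfPath Λ) (q : NK k) :
    (S.actInf g x).seg 0 q (le0 q) = S.act g (x.seg 0 q (le0 q)) := by
  change S.act (S.res g (x.seg 0 0 le_rfl)) _ = _
  rw [x.seg_self 0, S.res_ofObj]

lemma actInf_res_shift (g : G) (x : InfPath Λ) (n : NK k) :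
    S.actInf (S.res g (x.seg 0 n (le0 n))) (x.shift n) = (S.actInf g x).shift n := by
  refine InfPath.ext' (funext fun p => funext fun q => funext fun h => ?_)
  change S.act (S.res (S.res g (x.seg 0 n (le0 n))) ((x.shift n).seg 0 p (le0 p))) _ = _
  rw [res_seg_shift]
  rfl

end SelfSimilar

lemma QkG.mk_eq_mk_iff {f f' : CkG k G} :
    (QuotientGroup.mk f : QkG k G) = QuotientGroup.mk f' ↔
      ∃ z : NK k, ∀ p, z ≤ p → f p = f' p := by
  rw [QuotientGroup.eq]
  exact exists_congr fun z => forall₂_congr fun p _ => inv_mul_eq_one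

lemma transFun_toZ_add (a c : NK k) (f : CkG k G) : transFun (toZ a) f (c + a) = f c := by
  have h : ∀ i, toZ a i ≤ ((c + a) i : ℤ) := fun i => by simp [toZ]
  rw [transFun, if_pos h]
  congr 1
  funext i
  simp [toZ]

section Zset

variable {S : SelfSimilar k G Λ} {t t' : Triple k G Λ} {μ ν : Λ.Mor} {g : G}

lemma Zset_seg_fst (ht : t ∈ Zset S μ g ν) : t.1.seg 0 (Λ.d μ) (le0 _) = μ := by
  obtain ⟨x, y, z, -, hy, rfl⟩ := ht
  exact hy.2.1

lemma Zset_seg_snd (ht : t ∈ Zset S μ g ν) : t.2.2.seg 0 (Λ.d ν) (le0 _) = ν := by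
  obtain ⟨x, y, z, hz, -, rfl⟩ := ht
  exact hz.2.1

lemma Zset_degree (ht : t ∈ Zset S μ g ν) : t.2.1.2 = toZ (Λ.d μ) - toZ (Λ.d ν) := by
  obtain ⟨x, y, z, -, -, rfl⟩ := ht
  rfl

lemma Zset_subset_Gpd : Zset S μ g ν ⊆ Gpd S := by
  intro t ht
  refine ⟨g, μ, ν, ?_, ht⟩
  obtain ⟨x, y, z, hz, hy, rfl⟩ := ht
  have h : S.act g (Λ.ofObj (Λ.s ν)) = Λ.ofObj (Λ.s μ) := by
    rw [← hz.1, ← S.actInf_seg_zero]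
    exact hy.1
  rw [SelfSimilar.actV, h, Λ.s_ofObj]

lemma eq_of_mem_Zset_of_snd_eq (ht : t ∈ Zset S μ g ν) (ht' : t' ∈ Zset S μ g ν)
    (h : t.2.2 = t'.2.2) : t = t' := by
  obtain ⟨x, y, z, hz, hy, rfl⟩ := ht
  obtain ⟨x', y', z', hz', hy', rfl⟩ := ht'
  obtain rfl : z = z' := h
  obtain rfl : x = x' := hz.tail_unique hz'
  obtain rfl : y = y' := hy.unique hy'
  rfl

lemma exists_mem_Zset_seg_snd (ht : t ∈ Zset S μ g ν) {N : NK k} (hN : Λ.d ν ≤ N) :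
    ∃ μ' g', t ∈ Zset S μ' g' (t.2.2.seg 0 N (le0 N)) := by
  obtain ⟨n, rfl⟩ := exists_add_of_le hN
  obtain ⟨x, y, z, hz, hy, rfl⟩ := ht
  refine ⟨y.seg 0 (Λ.d μ + n) (le0 _), S.res g (x.seg 0 n (le0 n)), x.shift n, y, z,
    hz.shift n, S.actInf_res_shift g x n ▸ hy.shift n, ?_⟩
  have hQ : (QuotientGroup.mk (transFun (toZ (Λ.d μ + n))
        (S.resInf (S.res g (x.seg 0 n (le0 n))) (x.shift n))) : QkG k G)
      = QuotientGroup.mk (transFun (toZ (Λ.d μ)) (S.resInf g x)) := by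
    refine QkG.mk_eq_mk_iff.mpr ⟨Λ.d μ + n, fun p hp => ?_⟩
    obtain ⟨c, rfl⟩ := exists_add_of_le hp
    rw [add_comm (Λ.d μ + n) c, transFun_toZ_add, ← add_assoc, add_right_comm,
      transFun_toZ_add]
    exact S.res_seg_shift g x n c
  have hZ : toZ (Λ.d μ + n) - toZ (Λ.d ν + n) = toZ (Λ.d μ) - toZ (Λ.d ν) := by
    funext i
    simp only [toZ, Pi.sub_apply, Pi.add_apply]
    push_cast
    ring
  rw [y.d_seg_zero, z.d_seg_zero, hQ, hZ]

lemma SelfSimilar.PseudoFree.eq_of_mem_Zset (hpf : S.PseudoFree) {g₁ g₂ : G}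
    (h₁ : t ∈ Zset S μ g₁ ν) (h₂ : t ∈ Zset S μ g₂ ν) : g₁ = g₂ := by
  obtain ⟨x, y, z, hz, hy, rfl⟩ := h₁
  obtain ⟨x', y', z', hz', hy', ht⟩ := h₂
  simp only [Prod.mk.injEq] at ht
  obtain ⟨rfl, ⟨hQ, -⟩, rfl⟩ := ht
  obtain rfl : x = x' := hz.tail_unique hz'
  have hact : S.actInf g₁ x = S.actInf g₂ x := hy.tail_unique hy'
  obtain ⟨c, hc⟩ := QkG.mk_eq_mk_iff.mp hQ
  have hres := hc (c + Λ.d μ) le_self_add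
  rw [transFun_toZ_add, transFun_toZ_add] at hres
  refine hpf.eq_of_act_eq_of_res_eq S (μ := x.seg 0 c (le0 c)) ?_ hres
  rw [← S.actInf_seg_zero, ← S.actInf_seg_zero, hact]

lemma SelfSimilar.PseudoFree.eq_of_mem_Zset_of_d_eq (hpf : S.PseudoFree)
    {μ₁ μ₂ ν₁ ν₂ : Λ.Mor} {g₁ g₂ : G} (hν : Λ.d ν₁ = Λ.d ν₂)
    (h₁ : t ∈ Zset S μ₁ g₁ ν₁) (h₂ : t ∈ Zset S μ₂ g₂ ν₂) :
    μ₁ = μ₂ ∧ g₁ = g₂ ∧ ν₁ = ν₂ := by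
  obtain rfl : ν₁ = ν₂ :=
    (Zset_seg_snd h₁).symm.trans ((t.2.2.seg_congr rfl hν _ _).trans (Zset_seg_snd h₂))
  have hμ : Λ.d μ₁ = Λ.d μ₂ := by
    have h := (Zset_degree h₁).symm.trans (Zset_degree h₂)
    funext i
    simpa [toZ] using congrFun h i
  obtain rfl : μ₁ = μ₂ :=
    (Zset_seg_fst h₁).symm.trans ((t.1.seg_congr rfl hμ _ _).trans (Zset_seg_fst h₂))
  exact ⟨rfl, hpf.eq_of_mem_Zset h₁ h₂, rfl⟩

lemma exists_disjoint_Zset_of_ne (hpf : S.PseudoFree) {μa νa μb νb : Λ.Mor} {ga gb : G}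
    (ht : t ∈ Zset S μa ga νa) (ht' : t' ∈ Zset S μb gb νb) (hne : t ≠ t') :
    ∃ (μ₁ ν₁ : Λ.Mor) (g₁ : G) (μ₂ ν₂ : Λ.Mor) (g₂ : G),
      t ∈ Zset S μ₁ g₁ ν₁ ∧ t' ∈ Zset S μ₂ g₂ ν₂ ∧
        Disjoint (Zset S μ₁ g₁ ν₁) (Zset S μ₂ g₂ ν₂) := by
  obtain ⟨N, hN, hsnd⟩ := t.2.2.exists_ge_seg_zero_eq_imp_eq t'.2.2 (Λ.d νa ⊔ Λ.d νb)
  obtain ⟨μ₁, g₁, h₁⟩ := exists_mem_Zset_seg_snd ht (le_sup_left.trans hN)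
  obtain ⟨μ₂, g₂, h₂⟩ := exists_mem_Zset_seg_snd ht' (le_sup_right.trans hN)
  refine ⟨μ₁, _, g₁, μ₂, _, g₂, h₁, h₂, Set.disjoint_left.mpr fun u hu₁ hu₂ => hne ?_⟩
  obtain ⟨rfl, rfl, hν⟩ :=
    hpf.eq_of_mem_Zset_of_d_eq (by rw [InfPath.d_seg_zero, InfPath.d_seg_zero]) hu₁ hu₂
  exact eq_of_mem_Zset_of_snd_eq h₁ (hν ▸ h₂) (hsnd hν)

end Zset

lemma isOpen_preimage_Zset (S : SelfSimilar k G Λ) (μ : Λ.Mor) (g : G) (ν : Λ.Mor) :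
    @IsOpen _ (gpdTop S) (Subtype.val ⁻¹' Zset S μ g ν) :=
  TopologicalSpace.isOpen_generateFrom_of_mem ⟨μ, ν, g, Set.image_preimage_eq_of_subset
    (Subtype.range_coe.symm ▸ Zset_subset_Gpd)⟩

theorem stmt13_general {k : ℕ} (G : Type) [Group G]
    (Λ : KGraph k) (S : SelfSimilar k G Λ) (hpf : S.PseudoFree) :
    @T2Space {t : Triple k G Λ // t ∈ Gpd S} (gpdTop S) := by
  refine @T2Space.mk _ (gpdTop S) fun a b hab => ?_
  obtain ⟨_, _, _, _, ha⟩ := a.2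
  obtain ⟨_, _, _, _, hb⟩ := b.2
  obtain ⟨μ₁, ν₁, g₁, μ₂, ν₂, g₂, h₁, h₂, hdisj⟩ :=
    exists_disjoint_Zset_of_ne hpf ha hb (Subtype.coe_injective.ne hab)
  exact ⟨_, _, isOpen_preimage_Zset S μ₁ g₁ ν₁, isOpen_preimage_Zset S μ₂ g₂ ν₂, h₁, h₂,
    hdisj.preimage Subtype.val⟩

/-- for a pseudo free action, the topology on `G_{G,Λ}` generated by the
basic sets `B_{G,Λ}` is Hausdorff. -/
theorem stmt13 {k : ℕ} (hk : 0 < k) (G : Type) [Group G] [Countable G]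
    (Λ : KGraph k) (S : SelfSimilar k G Λ) (hpf : S.PseudoFree) :
    @T2Space {t : Triple k G Λ // t ∈ Gpd S} (gpdTop S) :=
  stmt13_general G Λ S hpf

end SSKG
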